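/- Let (θ_n)_{n≥1} be a strictly increasing sequence of positive real numbers with ∑_n 1/θ_n = +∞. Then for any 0 < a < b, the linear span of the power functions u ↦ u^{θ_n} is dense in L²([a,b]). -/

import Mathlib

/-!
For `μ ≥ 0` and distinct positive exponents `l k`, the operator
`D ↦ (ν - μ) x ^ ν ∫_x^b D(t) t ^ (-ν - 1) dt` maps `x ^ μ - ∑_{k<n} c k x ^ l k` to a function of
the same shape with the extra exponent `ν = l n`, and multiplies its sup norm on `[a, b]` by at most
`|1 - μ / ν|`. So `x ^ μ` is a uniform limit on `[a, b]` of combinations of the `x ^ l k` as soon as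
`∏ |1 - μ / l k| → 0`. This happens when `l k → ∞` with `∑ 1 / l k = ∞`, and when `l k → L` with
`μ < 2 L`; in the bounded case the exponents reached in `(0, c)` give, through a sequence increasing
to `c`, all exponents in `(0, 2 c)`, hence every `μ > 0`. Multiplying Weierstrass polynomials by `x`
then approximates every continuous function, and these are dense in `L²`.
-/

open MeasureTheory Real Filter Finset Set intervalIntegral
open scoped ENNReal NNReal Topology BoundedContinuousFunction

namespace MeasureTheory

variable {α E 𝕜 : Type*} [MeasurableSpace α] {μ : Measure α} {p : ℝ≥0∞}
  [NormedAddCommGroup E] [NormedRing 𝕜] [Module 𝕜 E] [IsBoundedSMul 𝕜 E]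

def toLpPreimage (K : Submodule 𝕜 (Lp E p μ)) : Submodule 𝕜 (α → E) where
  carrier := {f | ∃ hf : MemLp f p μ, hf.toLp f ∈ K}
  add_mem' := by
    rintro f g ⟨hf, hfK⟩ ⟨hg, hgK⟩
    exact ⟨hf.add hg, by rw [MemLp.toLp_add hf hg]; exact K.add_mem hfK hgK⟩
  zero_mem' := ⟨MemLp.zero, by rw [MemLp.toLp_zero]; exact K.zero_mem⟩
  smul_mem' := by
    rintro c f ⟨hf, hfK⟩
    exact ⟨hf.const_smul c, by rw [MemLp.toLp_const_smul c hf]; exact K.smul_mem c hfK⟩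

lemma mem_toLpPreimage {K : Submodule 𝕜 (Lp E p μ)} {f : α → E} (hf : MemLp f p μ) :
    f ∈ toLpPreimage K ↔ hf.toLp f ∈ K :=
  ⟨fun ⟨_, h⟩ => h, fun h => ⟨hf, h⟩⟩

lemma mem_toLpPreimage_of_forall_ae_norm_sub_le [Fact (1 ≤ p)] [IsFiniteMeasure μ]
    {K : Submodule 𝕜 (Lp E p μ)} (hK : IsClosed (K : Set (Lp E p μ))) {f : α → E}
    (hf : MemLp f p μ) (happrox : ∀ ε > 0, ∃ g ∈ toLpPreimage K, ∀ᵐ x ∂μ, ‖f x - g x‖ ≤ ε) :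
    f ∈ toLpPreimage K := by
  rw [mem_toLpPreimage hf, ← SetLike.mem_coe, ← hK.closure_eq, Metric.mem_closure_iff]
  intro ε hε
  set C : ℝ := measureUnivNNReal μ ^ p.toReal⁻¹
  have hC : 0 ≤ C := by positivity
  obtain ⟨g, ⟨hg, hgK⟩, hfg⟩ := happrox (ε / (C + 1)) (by positivity)
  refine ⟨hg.toLp g, hgK, ?_⟩
  rw [dist_eq_norm, ← MemLp.toLp_sub]
  calc ‖(hf.sub hg).toLp (f - g)‖ ≤ C * (ε / (C + 1)) := by
        refine Lp.norm_le_of_ae_bound (by positivity) ?_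
        filter_upwards [(hf.sub hg).coeFn_toLp, hfg] with x hx hfgx
        rwa [hx]
    _ < ε := by
        rw [mul_div_assoc', div_lt_iff₀ (by positivity)]
        nlinarith

end MeasureTheory

lemma pos_of_mem_uIcc {x b t : ℝ} (hx : 0 < x) (hxb : x ≤ b) (ht : t ∈ uIcc x b) : 0 < t := by
  rw [uIcc_of_le hxb] at ht; exact hx.trans_le ht.1

lemma integral_rpow_mul_rpow_neg_sub_one {x b s ν : ℝ} (hx : 0 < x) (hxb : x ≤ b) (hs : s ≠ ν) :
    ∫ t in x..b, t ^ s * t ^ (-ν - 1) = (b ^ (s - ν) - x ^ (s - ν)) / (s - ν) := by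
  have hnot : (0 : ℝ) ∉ uIcc x b := fun h => (pos_of_mem_uIcc hx hxb h).false
  rw [integral_congr (g := fun t => t ^ (s - ν - 1)) fun t ht => by
      rw [← rpow_add (pos_of_mem_uIcc hx hxb ht)]; ring_nf,
    integral_rpow (Or.inr ⟨fun h => hs (by linarith), hnot⟩), sub_add_cancel]

lemma intervalIntegrable_rpow_mul_rpow {x b s r : ℝ} (hx : 0 < x) (hxb : x ≤ b) :
    IntervalIntegrable (fun t => t ^ s * t ^ r) volume x b := by
  have hcont : ∀ e : ℝ, ContinuousOn (fun t : ℝ => t ^ e) (uIcc x b) := fun e =>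
    continuousOn_id.rpow_const fun t ht => Or.inl (pos_of_mem_uIcc hx hxb ht).ne'
  exact ((hcont s).mul (hcont r)).intervalIntegrable

lemma rpow_mul_integral_sub_sum_rpow {x b μ ν : ℝ} (hx : 0 < x) (hxb : x ≤ b) (hμν : μ ≠ ν)
    {l c : ℕ → ℝ} {n : ℕ} (hl : ∀ k < n, l k ≠ ν) :
    (ν - μ) * x ^ ν * ∫ t in x..b, (t ^ μ - ∑ k ∈ range n, c k * t ^ l k) * t ^ (-ν - 1) =
      x ^ μ - (∑ k ∈ range n, c k * ((μ - ν) / (l k - ν)) * x ^ l k +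
        (b ^ (μ - ν) - ∑ k ∈ range n, c k * ((μ - ν) / (l k - ν)) * b ^ (l k - ν)) * x ^ ν) := by
  have hpow : ∀ s, s ≠ ν → (ν - μ) * x ^ ν * ∫ t in x..b, t ^ s * t ^ (-ν - 1) =
      (μ - ν) / (s - ν) * (x ^ s - b ^ (s - ν) * x ^ ν) := fun s hs => by
    rw [integral_rpow_mul_rpow_neg_sub_one hx hxb hs, rpow_sub hx]
    have : s - ν ≠ 0 := sub_ne_zero.mpr hs
    field_simp
    ring
  have hsplit : ∫ t in x..b, (t ^ μ - ∑ k ∈ range n, c k * t ^ l k) * t ^ (-ν - 1) =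
      (∫ t in x..b, t ^ μ * t ^ (-ν - 1)) -
        ∑ k ∈ range n, c k * ∫ t in x..b, t ^ l k * t ^ (-ν - 1) := by
    simp only [sub_mul, Finset.sum_mul, mul_assoc]
    rw [intervalIntegral.integral_sub (g := fun t => ∑ k ∈ range n, c k * (t ^ l k * t ^ (-ν - 1)))
        (intervalIntegrable_rpow_mul_rpow hx hxb)
        (by
          rw [← Finset.sum_fn]
          exact IntervalIntegrable.sum _ fun k _ =>
            (intervalIntegrable_rpow_mul_rpow hx hxb).const_mul _),
      integral_finsetSum fun k _ => (intervalIntegrable_rpow_mul_rpow hx hxb).const_mul _]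
    simp only [intervalIntegral.integral_const_mul]
  rw [hsplit, mul_sub, hpow μ hμν, div_self (sub_ne_zero.mpr hμν), Finset.mul_sum,
    Finset.sum_congr rfl fun k hk => by
      rw [mul_left_comm, hpow (l k) (hl k (mem_range.mp hk))]]
  have hterm : ∀ k, c k * ((μ - ν) / (l k - ν) * (x ^ l k - b ^ (l k - ν) * x ^ ν)) =
      c k * ((μ - ν) / (l k - ν)) * x ^ l k - c k * ((μ - ν) / (l k - ν)) * b ^ (l k - ν) * x ^ ν :=
    fun k => by ring
  simp only [hterm, Finset.sum_sub_distrib, sub_mul, Finset.sum_mul]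
  ring

lemma abs_rpow_mul_integral_le {D : ℝ → ℝ} {x b ν B : ℝ} (hx : 0 < x) (hxb : x ≤ b)
    (hν : 0 < ν) (hD : ∀ t ∈ Icc x b, |D t| ≤ B) :
    |x ^ ν * ∫ t in x..b, D t * t ^ (-ν - 1)| ≤ B / ν := by
  have hB : 0 ≤ B := (abs_nonneg _).trans (hD x ⟨le_rfl, hxb⟩)
  have hint : ∫ t in x..b, B * t ^ (-ν - 1) = B * ((x ^ (-ν) - b ^ (-ν)) / ν) := by
    rw [intervalIntegral.integral_const_mul, integral_rpow (Or.inr ⟨by linarith,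
      fun h => (pos_of_mem_uIcc hx hxb h).false⟩), sub_add_cancel]
    ring
  have hbound : ‖∫ t in x..b, D t * t ^ (-ν - 1)‖ ≤ B * ((x ^ (-ν) - b ^ (-ν)) / ν) := by
    rw [← hint]
    refine norm_integral_le_of_norm_le hxb (Eventually.of_forall fun t ht => ?_) ?_
    · have ht0 : 0 < t := hx.trans ht.1
      rw [norm_mul, Real.norm_eq_abs, Real.norm_of_nonneg (rpow_nonneg ht0.le _)]
      exact mul_le_mul_of_nonneg_right (hD t ⟨ht.1.le, ht.2⟩) (rpow_nonneg ht0.le _)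
    · exact (continuousOn_const.mul (continuousOn_id.rpow_const fun t ht =>
        Or.inl (pos_of_mem_uIcc hx hxb ht).ne')).intervalIntegrable
  have hxx : x ^ ν * x ^ (-ν) = 1 := by rw [← rpow_add hx]; simp
  have hxb' : 0 ≤ x ^ ν * b ^ (-ν) :=
    mul_nonneg (rpow_nonneg hx.le _) (rpow_nonneg (hx.le.trans hxb) _)
  calc |x ^ ν * ∫ t in x..b, D t * t ^ (-ν - 1)|
      ≤ x ^ ν * (B * ((x ^ (-ν) - b ^ (-ν)) / ν)) := by
        rw [abs_mul, abs_of_pos (rpow_pos_of_pos hx ν)]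
        exact mul_le_mul_of_nonneg_left hbound (rpow_nonneg hx.le ν)
    _ = B / ν * (x ^ ν * x ^ (-ν) - x ^ ν * b ^ (-ν)) := by ring
    _ ≤ B / ν := by rw [hxx]; nlinarith [div_nonneg hB hν.le]

lemma exists_sum_rpow_approx_succ {a b μ B : ℝ} (ha : 0 < a) {l c : ℕ → ℝ} {n : ℕ}
    (hln : 0 < l n) (hl : ∀ k < n, l k ≠ l n)
    (hc : ∀ x ∈ Icc a b, |x ^ μ - ∑ k ∈ range n, c k * x ^ l k| ≤ B) :
    ∃ c' : ℕ → ℝ, ∀ x ∈ Icc a b,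
      |x ^ μ - ∑ k ∈ range (n + 1), c' k * x ^ l k| ≤ B * |1 - μ / l n| := by
  set ν := l n
  by_cases hμν : μ = ν
  · refine ⟨fun k => if k = n then 1 else 0, fun x _ => ?_⟩
    simp [Finset.sum_ite_eq', hμν, ν, div_self hln.ne']
  set w : ℕ → ℝ := fun k => c k * ((μ - ν) / (l k - ν))
  refine ⟨fun k => if k = n then b ^ (μ - ν) - ∑ j ∈ range n, w j * b ^ (l j - ν) else w k,
    fun x hx => ?_⟩
  have hx0 : 0 < x := ha.trans_le hx.1
  have hsum : ∑ k ∈ range (n + 1),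
      (if k = n then b ^ (μ - ν) - ∑ j ∈ range n, w j * b ^ (l j - ν) else w k) * x ^ l k =
      ∑ k ∈ range n, w k * x ^ l k +
        (b ^ (μ - ν) - ∑ j ∈ range n, w j * b ^ (l j - ν)) * x ^ ν := by
    rw [sum_range_succ, if_pos rfl]
    congr 1
    exact sum_congr rfl fun k hk => by rw [if_neg (mem_range.mp hk).ne]
  rw [hsum, ← rpow_mul_integral_sub_sum_rpow hx0 hx.2 hμν hl, mul_assoc, abs_mul]
  calc |ν - μ| * |x ^ ν * ∫ t in x..b, (t ^ μ - ∑ k ∈ range n, c k * t ^ l k) * t ^ (-ν - 1)|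
      ≤ |ν - μ| * (B / ν) :=
        mul_le_mul_of_nonneg_left (abs_rpow_mul_integral_le hx0 hx.2 hln
          fun t ht => hc t ⟨hx.1.trans ht.1, ht.2⟩) (abs_nonneg _)
    _ = B * |1 - μ / ν| := by
        rw [one_sub_div hln.ne', abs_div, abs_of_pos hln]
        ring

lemma exists_sum_rpow_approx {a b μ : ℝ} (ha : 0 < a) (hμ : 0 ≤ μ) {l : ℕ → ℝ}
    (hl : ∀ k, 0 < l k) (hinj : Function.Injective l) (n : ℕ) :
    ∃ c : ℕ → ℝ, ∀ x ∈ Icc a b,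
      |x ^ μ - ∑ k ∈ range n, c k * x ^ l k| ≤ b ^ μ * ∏ k ∈ range n, |1 - μ / l k| := by
  induction n with
  | zero =>
    refine ⟨0, fun x hx => ?_⟩
    have hx0 : 0 ≤ x := ha.le.trans hx.1
    simpa [abs_of_nonneg (rpow_nonneg hx0 μ)] using rpow_le_rpow hx0 hx.2 hμ
  | succ n ih =>
    obtain ⟨c, hc⟩ := ih
    obtain ⟨c', hc'⟩ := exists_sum_rpow_approx_succ ha (hl n)
      (fun k hk => hinj.ne hk.ne) hc
    exact ⟨c', fun x hx => by rw [prod_range_succ, ← mul_assoc]; exact hc' x hx⟩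

lemma tendsto_prod_range_zero_of_le_exp_neg {f g : ℕ → ℝ} (hf : ∀ k, 0 ≤ f k)
    (hfg : ∀ᶠ k in atTop, f k ≤ exp (-g k))
    (hg : Tendsto (fun n => ∑ k ∈ range n, g k) atTop atTop) :
    Tendsto (fun n => ∏ k ∈ range n, f k) atTop (𝓝 0) := by
  obtain ⟨N, hN⟩ := eventually_atTop.mp hfg
  set C := ∏ k ∈ range N, f k
  have hbound : ∀ᶠ n in atTop, ∏ k ∈ range n, f k ≤
      C * exp (∑ k ∈ range N, g k - ∑ k ∈ range n, g k) := by
    filter_upwards [eventually_ge_atTop N] with n hn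
    have hsum : ∑ k ∈ range N, g k - ∑ k ∈ range n, g k = ∑ k ∈ Ico N n, -g k := by
      rw [← sum_range_add_sum_Ico _ hn, sum_neg_distrib]; ring
    rw [← prod_range_mul_prod_Ico _ hn, hsum, exp_sum]
    exact mul_le_mul_of_nonneg_left (prod_le_prod (fun k _ => hf k)
      fun k hk => hN k (mem_Ico.mp hk).1) (prod_nonneg fun k _ => hf k)
  have hlim : Tendsto (fun n => C * exp (∑ k ∈ range N, g k - ∑ k ∈ range n, g k))
      atTop (𝓝 0) := by
    simpa [sub_eq_add_neg] using (tendsto_exp_atBot.comp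
      (tendsto_atBot_add_const_left _ _ (tendsto_neg_atTop_atBot.comp hg))).const_mul C
  exact squeeze_zero' (Eventually.of_forall fun n => prod_nonneg fun k _ => hf k) hbound hlim

lemma tendsto_prod_range_abs_one_sub_div_of_tendsto_atTop {l : ℕ → ℝ} (hl : ∀ k, 0 < l k)
    (hl_top : Tendsto l atTop atTop) (hdiv : ¬ Summable fun k => 1 / l k) {μ : ℝ} (hμ : 0 < μ) :
    Tendsto (fun n => ∏ k ∈ range n, |1 - μ / l k|) atTop (𝓝 0) := by
  refine tendsto_prod_range_zero_of_le_exp_neg (g := fun k => μ / l k) (fun k => abs_nonneg _) ?_ ?_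
  · filter_upwards [hl_top.eventually_ge_atTop μ] with k hk
    rw [abs_of_nonneg (sub_nonneg.mpr ((div_le_one (hl k)).mpr hk)), sub_eq_neg_add]
    exact add_one_le_exp _
  · have hsum := (not_summable_iff_tendsto_nat_atTop_of_nonneg
      fun k => (one_div_pos.mpr (hl k)).le).mp hdiv
    simpa [mul_sum, div_eq_mul_inv] using hsum.const_mul_atTop hμ

lemma tendsto_prod_range_abs_one_sub_div_of_tendsto {l : ℕ → ℝ} {L μ : ℝ}
    (hl : Tendsto l atTop (𝓝 L)) (hμ : 0 < μ) (hμL : μ < 2 * L) :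
    Tendsto (fun n => ∏ k ∈ range n, |1 - μ / l k|) atTop (𝓝 0) := by
  have hL : 0 < L := by linarith
  have hr : |1 - μ / L| < 1 := by
    rw [abs_sub_lt_iff, sub_lt_self_iff, sub_lt_iff_lt_add, div_lt_iff₀ hL]
    exact ⟨div_pos hμ hL, by linarith⟩
  obtain ⟨q, hrq, hq⟩ := exists_between hr
  have hq0 : 0 < q := (abs_nonneg _).trans_lt hrq
  refine tendsto_prod_range_zero_of_le_exp_neg (g := fun _ => -log q) (fun k => abs_nonneg _) ?_ ?_
  · have hfac : Tendsto (fun k => |1 - μ / l k|) atTop (𝓝 |1 - μ / L|) :=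
      ((tendsto_const_nhds.div hl hL.ne').const_sub 1).abs
    filter_upwards [hfac.eventually_le_const hrq] with k hk
    rwa [neg_neg, exp_log hq0]
  · simpa using tendsto_natCast_atTop_atTop.atTop_mul_const (neg_pos.mpr (log_neg hq0 hq))

lemma ContinuousOn.memLp_restrict_Icc {E : Type*} [NormedAddCommGroup E] {f : ℝ → E} {a b : ℝ}
    (hf : ContinuousOn f (Icc a b)) (p : ℝ≥0∞) : MemLp f p (volume.restrict (Icc a b)) := by
  obtain ⟨C, hC⟩ := isCompact_Icc.exists_bound_of_continuousOn hf
  exact MemLp.of_bound (hf.aestronglyMeasurable measurableSet_Icc) C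
    (ae_restrict_of_forall_mem measurableSet_Icc hC)

lemma continuousOn_rpow_const_Icc {a : ℝ} (ha : 0 < a) (b e : ℝ) :
    ContinuousOn (fun x : ℝ => x ^ e) (Icc a b) :=
  continuousOn_id.rpow_const fun _ hx => Or.inl (ha.trans_le hx.1).ne'

section Muntz

variable {a b : ℝ} {K : Submodule ℝ (Lp ℝ 2 (volume.restrict (Icc a b)))}

lemma mem_toLpPreimage_of_forall_abs_sub_le
    (hK : IsClosed (K : Set (Lp ℝ 2 (volume.restrict (Icc a b))))) {f : ℝ → ℝ}
    (hf : ContinuousOn f (Icc a b))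
    (happrox : ∀ ε > 0, ∃ g ∈ toLpPreimage K, ∀ x ∈ Icc a b, |f x - g x| ≤ ε) :
    f ∈ toLpPreimage K :=
  mem_toLpPreimage_of_forall_ae_norm_sub_le hK (hf.memLp_restrict_Icc 2) fun ε hε =>
    let ⟨g, hg, hfg⟩ := happrox ε hε
    ⟨g, hg, ae_restrict_of_forall_mem measurableSet_Icc hfg⟩

lemma rpow_mem_toLpPreimage_of_tendsto_prod (ha : 0 < a)
    (hK : IsClosed (K : Set (Lp ℝ 2 (volume.restrict (Icc a b))))) {l : ℕ → ℝ}
    (hl : ∀ k, 0 < l k) (hinj : Function.Injective l)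
    (hlK : ∀ k, (fun x : ℝ => x ^ l k) ∈ toLpPreimage K) {μ : ℝ} (hμ : 0 ≤ μ)
    (hprod : Tendsto (fun n => ∏ k ∈ range n, |1 - μ / l k|) atTop (𝓝 0)) :
    (fun x : ℝ => x ^ μ) ∈ toLpPreimage K := by
  refine mem_toLpPreimage_of_forall_abs_sub_le hK (continuousOn_rpow_const_Icc ha b μ)
    fun ε hε => ?_
  have hlim : Tendsto (fun n => b ^ μ * ∏ k ∈ range n, |1 - μ / l k|) atTop (𝓝 0) := by
    simpa using hprod.const_mul (b ^ μ)
  obtain ⟨n, hn⟩ := (hlim.eventually_lt_const hε).exists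
  obtain ⟨c, hc⟩ := exists_sum_rpow_approx ha hμ hl hinj n
  refine ⟨∑ k ∈ range n, c k • fun x : ℝ => x ^ l k,
    sum_mem fun k _ => Submodule.smul_mem _ _ (hlK k), fun x hx => ?_⟩
  simpa only [Finset.sum_apply, Pi.smul_apply, smul_eq_mul] using (hc x hx).trans hn.le

lemma rpow_mem_toLpPreimage_of_tendsto (ha : 0 < a)
    (hK : IsClosed (K : Set (Lp ℝ 2 (volume.restrict (Icc a b))))) {l : ℕ → ℝ}
    (hl : ∀ k, 0 < l k) (hmono : StrictMono l)
    (hlK : ∀ k, (fun x : ℝ => x ^ l k) ∈ toLpPreimage K) {L : ℝ} (hlim : Tendsto l atTop (𝓝 L))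
    {μ : ℝ} (hμ : 0 < μ) (hμL : μ < 2 * L) :
    (fun x : ℝ => x ^ μ) ∈ toLpPreimage K :=
  rpow_mem_toLpPreimage_of_tendsto_prod ha hK hl hmono.injective hlK hμ.le
    (tendsto_prod_range_abs_one_sub_div_of_tendsto hlim hμ hμL)

lemma rpow_mem_toLpPreimage_of_forall_Ioo (ha : 0 < a)
    (hK : IsClosed (K : Set (Lp ℝ 2 (volume.restrict (Icc a b))))) {c : ℝ} (hc : 0 < c)
    (h : ∀ μ ∈ Ioo 0 c, (fun x : ℝ => x ^ μ) ∈ toLpPreimage K) :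
    ∀ μ ∈ Ioo 0 (2 * c), (fun x : ℝ => x ^ μ) ∈ toLpPreimage K := by
  obtain ⟨l, hmono, hl, hlim⟩ := exists_seq_strictMono_tendsto' hc
  exact fun μ hμ => rpow_mem_toLpPreimage_of_tendsto ha hK (fun k => (hl k).1) hmono
    (fun k => h _ (hl k)) hlim hμ.1 hμ.2

lemma rpow_mem_toLpPreimage_of_bddAbove (ha : 0 < a)
    (hK : IsClosed (K : Set (Lp ℝ 2 (volume.restrict (Icc a b))))) {θ : ℕ → ℝ}
    (hpos : ∀ n, 0 < θ n) (hmono : StrictMono θ) (hbdd : BddAbove (range θ))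
    (hθK : ∀ n, (fun x : ℝ => x ^ θ n) ∈ toLpPreimage K) {μ : ℝ} (hμ : 0 < μ) :
    (fun x : ℝ => x ^ μ) ∈ toLpPreimage K := by
  have hlim := tendsto_atTop_ciSup hmono.monotone hbdd
  have hL : 0 < ⨆ n, θ n := (hpos 0).trans_le (le_ciSup hbdd 0)
  have hIoo : ∀ j : ℕ, ∀ ν ∈ Ioo 0 (2 ^ j * (2 * ⨆ n, θ n)),
      (fun x : ℝ => x ^ ν) ∈ toLpPreimage K := by
    intro j
    induction j with
    | zero => simpa using fun ν hν hνL =>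
        rpow_mem_toLpPreimage_of_tendsto ha hK hpos hmono hθK hlim hν hνL
    | succ j ih =>
      rw [pow_succ', mul_assoc]
      exact rpow_mem_toLpPreimage_of_forall_Ioo ha hK (by positivity) ih
  obtain ⟨j, hj⟩ := pow_unbounded_of_one_lt (μ / (2 * ⨆ n, θ n)) one_lt_two
  exact hIoo j μ ⟨hμ, by rwa [div_lt_iff₀ (by positivity)] at hj⟩

lemma rpow_mem_toLpPreimage_of_not_summable (ha : 0 < a)
    (hK : IsClosed (K : Set (Lp ℝ 2 (volume.restrict (Icc a b))))) {θ : ℕ → ℝ}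
    (hpos : ∀ n, 0 < θ n) (hmono : StrictMono θ) (hdiv : ¬ Summable fun n => 1 / θ n)
    (hθK : ∀ n, (fun x : ℝ => x ^ θ n) ∈ toLpPreimage K) {μ : ℝ} (hμ : 0 < μ) :
    (fun x : ℝ => x ^ μ) ∈ toLpPreimage K := by
  by_cases hbdd : BddAbove (range θ)
  · exact rpow_mem_toLpPreimage_of_bddAbove ha hK hpos hmono hbdd hθK hμ
  · exact rpow_mem_toLpPreimage_of_tendsto_prod ha hK hpos hmono.injective hθK hμ.le
      (tendsto_prod_range_abs_one_sub_div_of_tendsto_atTop hpos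
        (tendsto_atTop_atTop_of_monotone' hmono.monotone hbdd) hdiv hμ)

lemma mem_toLpPreimage_of_continuousOn (ha : 0 < a) (hab : a ≤ b)
    (hK : IsClosed (K : Set (Lp ℝ 2 (volume.restrict (Icc a b)))))
    (hpow : ∀ n : ℕ, (fun x : ℝ => x ^ ((n : ℝ) + 1)) ∈ toLpPreimage K) {f : ℝ → ℝ}
    (hf : ContinuousOn f (Icc a b)) :
    f ∈ toLpPreimage K := by
  have hb : 0 < b := ha.trans_le hab
  refine mem_toLpPreimage_of_forall_abs_sub_le hK hf fun ε hε => ?_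
  obtain ⟨p, hp⟩ := exists_polynomial_near_of_continuousOn a b (fun x => f x / x)
    (hf.div continuousOn_id fun x hx => (ha.trans_le hx.1).ne') (ε / b) (by positivity)
  refine ⟨∑ i ∈ range (p.natDegree + 1), p.coeff i • fun x : ℝ => x ^ ((i : ℝ) + 1),
    sum_mem fun i _ => Submodule.smul_mem _ _ (hpow i), fun x hx => ?_⟩
  have hx0 : 0 < x := ha.trans_le hx.1
  have hxp : (∑ i ∈ range (p.natDegree + 1), p.coeff i • fun x : ℝ => x ^ ((i : ℝ) + 1)) x =
      x * p.eval x := by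
    simp only [Finset.sum_apply, Pi.smul_apply, smul_eq_mul, Polynomial.eval_eq_sum_range,
      mul_sum]
    refine sum_congr rfl fun i _ => ?_
    rw [rpow_add_one hx0.ne', rpow_natCast]
    ring
  rw [hxp]
  calc |f x - x * p.eval x| = x * |p.eval x - f x / x| := by
        rw [show f x - x * p.eval x = -(x * (p.eval x - f x / x)) by field_simp; ring,
          abs_neg, abs_mul, abs_of_pos hx0]
    _ ≤ b * (ε / b) := mul_le_mul hx.2 (hp x hx).le (abs_nonneg _) hb.le
    _ = ε := mul_div_cancel₀ _ hb.ne'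

end Muntz

/-- Müntz theorem in `L²`: if `θ_n > 0` is strictly increasing with `∑ 1/θ_n = ∞`,
then for `0 < a < b` the span of the power functions `u ↦ u^{θ_n}` is dense in
`L²([a,b])`. -/
theorem stmt3
    (θ : ℕ → ℝ) (hpos : ∀ n, 0 < θ n) (hmono : StrictMono θ)
    (hdiv : ¬ Summable (fun n : ℕ => 1 / θ n))
    (a b : ℝ) (ha : 0 < a) (hab : a < b)
    (hmem : ∀ n, MemLp (fun u : ℝ => u ^ θ n) 2 (volume.restrict (Set.Icc a b))) :
    Dense
      (↑(Submodule.span ℝ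
          (Set.range fun n => MemLp.toLp (fun u : ℝ => u ^ θ n) (hmem n))) :
        Set (Lp ℝ 2 (volume.restrict (Set.Icc a b)))) := by
  set K := (Submodule.span ℝ
    (Set.range fun n => (hmem n).toLp fun u : ℝ => u ^ θ n)).topologicalClosure
  have hK : IsClosed (K : Set (Lp ℝ 2 (volume.restrict (Icc a b)))) :=
    Submodule.isClosed_topologicalClosure _
  have hθK : ∀ n, (fun u : ℝ => u ^ θ n) ∈ toLpPreimage K := fun n =>
    ⟨hmem n, Submodule.le_topologicalClosure _ (Submodule.subset_span ⟨n, rfl⟩)⟩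
  have hcont : ∀ f : ℝ →ᵇ ℝ,
      BoundedContinuousFunction.toLp 2 (volume.restrict (Icc a b)) ℝ f ∈ K := by
    intro f
    obtain ⟨hf, hfK⟩ := mem_toLpPreimage_of_continuousOn ha hab.le hK
      (fun n => rpow_mem_toLpPreimage_of_not_summable ha hK hpos hmono hdiv hθK (by positivity))
      f.continuous.continuousOn
    convert hfK using 1
    exact Lp.ext ((BoundedContinuousFunction.coeFn_toLp _ _ _ f).trans hf.coeFn_toLp.symm)
  rw [← dense_closure, ← Submodule.topologicalClosure_coe]
  exact (BoundedContinuousFunction.toLp_denseRange ℝ (p := 2) _ ℝ ENNReal.ofNat_ne_top).mono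
    (range_subset_iff.mpr hcont)
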